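/- Let g : ℕ → ℕ be monotone (nondecreasing) with g(b) ≥ b+1 for all b, let b ≥ 1, and let α, β be ordinals below ε₀ with α > β and coordinate bound |β| < b. Then g^β(b) ≤ g^α(b). -/

import Mathlib

open Ordinal

noncomputable def eps0 : Ordinal.{0} := Ordinal.nfp (fun a => Ordinal.omega0 ^ a) 0

/-- Rebuild an ordinal from a list of (exponent, coefficient) pairs. -/
noncomputable def ofCNF (L : List (Ordinal.{0} × Ordinal.{0})) : Ordinal.{0} :=
  L.foldr (fun p r => Ordinal.omega0 ^ p.1 * p.2 + r) 0

open scoped Classical in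
/-- The fundamental-sequence approximation `α[x]`. -/
noncomputable def fundSeq (x : ℕ) : Ordinal.{0} → Ordinal.{0} :=
  WellFounded.fix Ordinal.lt_wf (fun α IH =>
    if hα : α = 0 then 0
    else
      match hL : (Ordinal.CNF Ordinal.omega0 α).getLast? with
      | none => 0
      | some p =>
        if p.1 = 0 then Ordinal.pred α
        else if h : p.1 < α then
          ofCNF ((Ordinal.CNF Ordinal.omega0 α).dropLast
            ++ [(p.1, p.2 - 1), (IH p.1 h, (x : Ordinal))])
        else 0)

open scoped Classical in
/-- Transfinite iterates `g^α` of `g : ℕ → ℕ`, defined by `g^0(b) = b` and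
`g^α(b) = g^{α[b]}(g b)`. -/
noncomputable def iterOrd (g : ℕ → ℕ) : Ordinal.{0} → ℕ → ℕ :=
  WellFounded.fix Ordinal.lt_wf (fun α IH => fun b =>
    if hα : α = 0 then b
    else if h : fundSeq b α < α then IH (fundSeq b α) h (g b)
    else 0)

open scoped Classical in
/-- The coordinate bound `|α|`: the maximum of all coefficients and (hereditarily)
exponent-bounds appearing in the Cantor normal form of `α`. -/
noncomputable def coordBound : Ordinal.{0} → ℕ :=
  WellFounded.fix Ordinal.lt_wf (fun α IH =>
    ((Ordinal.CNF Ordinal.omega0 α).map (fun p =>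
      max (p.2.card.toNat) (if h : p.1 < α then IH p.1 h else 0))).foldr max 0)

/-!
Four properties of the fundamental sequences below `ε₀` drive the proof, each shown by induction
along the Cantor normal form: `α[x] < α`, `α[x]` is monotone in `x`, `|α[x]| ≤ max |α| x`, and
the Bachmann property `β < α → |β| < x → β ≤ α[x]`. A simultaneous induction on `α` then shows
that `g^β(b) ≤ g^α(b)` for `β ≤ α` and `|β| < b`, and that `g^α` is monotone above `|α|`.
Unfolding `g^α(b) = g^{α[b]}(g b)`, the first follows from `β ≤ α[b]` and `b < g b`, the second
from `α[b] ≤ α[b']` and `|α[b]| ≤ b < g b`.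
-/

open Set

lemma eps0_eq_epsilon_zero : eps0 = ε₀ := epsilon_zero_eq_nfp.symm

lemma pred_add_of_ne_zero (a : Ordinal) {b : Ordinal} (hb : b ≠ 0) : pred (a + b) = a + pred b := by
  rcases zero_or_succ_or_isSuccLimit b with rfl | ⟨b, rfl⟩ | hlim
  · exact (hb rfl).elim
  · rw [Order.succ_eq_add_one, ← add_assoc, pred_add_one, pred_add_one]
  · rw [pred_eq_of_isSuccPrelimit hlim.isSuccPrelimit,
      pred_eq_of_isSuccPrelimit (isSuccLimit_add a hlim).isSuccPrelimit]

lemma opow_mul_natCast_lt_opow {e f : Ordinal} (hfe : f < e) (x : ℕ) : ω ^ f * x < ω ^ e :=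
  mul_lt_omega0_opow (hfe.trans_le' zero_le) ((opow_lt_opow_iff_right one_lt_omega0).2 hfe)
    (natCast_lt_omega0 x)

section EpsilonZero

variable {a e r : Ordinal}

lemma omega0_opow_lt_epsilon_zero (h : a < ε₀) : ω ^ a < ε₀ := by
  simpa using (opow_lt_opow_iff_right one_lt_omega0).2 h

lemma lt_omega0_opow_self (h : a < ε₀) : a < ω ^ a :=
  lt_of_not_ge fun h' => (epsilon_zero_le_of_omega0_opow_le h').not_gt h

lemma opow_mul_add_lt_epsilon_zero (he : e < ε₀) (hr : r < ω ^ e) (c : ℕ) :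
    ω ^ e * c + r < ε₀ := by
  simpa using opow_mul_add_lt_opow (natCast_lt_omega0 c) hr he

lemma fst_lt_of_mem_CNF {p : Ordinal × Ordinal} (ha : a < ε₀) (hp : p ∈ CNF ω a) : p.1 < a := by
  have ha0 : a ≠ 0 := by rintro rfl; simp at hp
  have hlog : p.1 ≤ log ω a := CNF.fst_le_log hp
  calc p.1 < ω ^ p.1 := lt_omega0_opow_self ((hlog.trans (log_le_self _ _)).trans_lt ha)
    _ ≤ ω ^ log ω a := opow_le_opow_right omega0_pos hlog
    _ ≤ a := opow_log_le_self _ ha0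

lemma exists_eq_opow_log_mul_add (ha : a ≠ 0) :
    ∃ (c : ℕ) (r : Ordinal), a = ω ^ log ω a * c + r ∧ c ≠ 0 ∧ r < ω ^ log ω a := by
  obtain ⟨c, hc⟩ := lt_omega0.1 (div_opow_log_lt a one_lt_omega0)
  refine ⟨c, a % ω ^ log ω a, hc ▸ (div_add_mod _ _).symm, ?_,
    mod_lt _ (opow_ne_zero _ omega0_ne_zero)⟩
  exact_mod_cast hc ▸ (div_opow_log_pos ω ha).ne'

@[elab_as_elim]
theorem lt_epsilon_zero_induction {P : Ordinal → Prop} (natCast : ∀ n : ℕ, P n)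
    (opow_mul : ∀ e (c : ℕ), e ≠ 0 → e < ε₀ → c ≠ 0 → P e → P (ω ^ e * c))
    (opow_mul_add : ∀ e r (c : ℕ), e < ε₀ → r ≠ 0 → r < ω ^ e → c ≠ 0 → P r →
      P (ω ^ e * c + r)) (ha : a < ε₀) : P a := by
  induction a using WellFoundedLT.induction with
  | _ a ih =>
    rcases eq_or_ne a 0 with rfl | ha0
    · exact_mod_cast natCast 0
    obtain ⟨c, r, hdecomp, hc, hr⟩ := exists_eq_opow_log_mul_add ha0
    have hlog : log ω a < a :=
      (lt_omega0_opow_self ((log_le_self _ _).trans_lt ha)).trans_le (opow_log_le_self _ ha0)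
    have he : log ω a < ε₀ := hlog.trans ha
    rcases eq_or_ne r 0 with rfl | hr0
    · rw [add_zero] at hdecomp
      rcases eq_or_ne (log ω a) 0 with he0 | he0
      · rw [hdecomp, he0, opow_zero, one_mul]
        exact natCast c
      · rw [hdecomp]
        exact opow_mul _ c he0 he hc (ih _ hlog he)
    · have hra : r < a := hr.trans_le (opow_log_le_self _ ha0)
      rw [hdecomp]
      exact opow_mul_add _ r c he hr0 hr hc (ih r hra (hra.trans ha))

end EpsilonZero

section CoordBound

variable {a e r : Ordinal}

lemma coordBound_eq (ha : a < ε₀) :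
    coordBound a = ((CNF ω a).map fun p => max p.2.card.toNat (coordBound p.1)).foldr max 0 := by
  rw [coordBound, WellFounded.fix_eq]
  congr 1
  refine List.map_congr_left fun p hp => ?_
  rw [dif_pos (fst_lt_of_mem_CNF ha hp)]

lemma coordBound_zero : coordBound 0 = 0 := by
  simp [coordBound_eq (epsilon_pos 0)]

lemma coordBound_opow_mul_add (he : e < ε₀) (hr : r < ω ^ e) {c : ℕ} (hc : c ≠ 0) :
    coordBound (ω ^ e * c + r) = max (max c (coordBound e)) (coordBound r) := by
  rw [coordBound_eq (opow_mul_add_lt_epsilon_zero he hr c),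
    CNF.opow_mul_add one_lt_omega0 (by exact_mod_cast hc) (natCast_lt_omega0 c) hr,
    coordBound_eq (hr.trans (omega0_opow_lt_epsilon_zero he))]
  simp

lemma coordBound_opow_mul_add_le (he : e < ε₀) (hr : r < ω ^ e) (c : ℕ) :
    coordBound (ω ^ e * c + r) ≤ max (max c (coordBound e)) (coordBound r) := by
  rcases eq_or_ne c 0 with rfl | hc
  · simp
  · exact (coordBound_opow_mul_add he hr hc).le

lemma coordBound_le_opow_mul_add (he : e < ε₀) (hr : r < ω ^ e) (c : ℕ) :
    coordBound r ≤ coordBound (ω ^ e * c + r) := by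
  rcases eq_or_ne c 0 with rfl | hc
  · simp
  · exact (coordBound_opow_mul_add he hr hc).ge.trans' (le_max_right _ _)

lemma coordBound_opow_mul_le (he : e < ε₀) (c : ℕ) :
    coordBound (ω ^ e * c) ≤ max c (coordBound e) := by
  simpa [coordBound_zero] using coordBound_opow_mul_add_le he (opow_pos e omega0_pos) c

lemma coordBound_natCast (n : ℕ) : coordBound n = n := by
  rcases eq_or_ne n 0 with rfl | hn
  · simpa using coordBound_zero
  · simpa [coordBound_zero] using
      coordBound_opow_mul_add (epsilon_pos 0) (opow_pos 0 omega0_pos) hn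

lemma coordBound_log_le (ha : a < ε₀) : coordBound (log ω a) ≤ coordBound a := by
  rcases eq_or_ne a 0 with rfl | ha0
  · simp
  obtain ⟨c, r, hdecomp, hc, hr⟩ := exists_eq_opow_log_mul_add ha0
  have h := coordBound_opow_mul_add ((log_le_self _ _).trans_lt ha) hr hc
  rw [← hdecomp] at h
  omega

lemma lt_opow_mul_of_coordBound_lt {f : Ordinal} {x : ℕ} (ha : a < ε₀) (hx : coordBound a < x)
    (hlog : log ω a ≤ f) : a < ω ^ f * x := by
  rcases eq_or_ne a 0 with rfl | ha0
  · exact mul_pos (opow_pos f omega0_pos) (by exact_mod_cast Nat.zero_lt_of_lt hx)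
  obtain ⟨c, r, hdecomp, hc, hr⟩ := exists_eq_opow_log_mul_add ha0
  have hcx : c < x := by
    rw [hdecomp, coordBound_opow_mul_add ((log_le_self _ _).trans_lt ha) hr hc] at hx
    omega
  calc a = ω ^ log ω a * c + r := hdecomp
    _ < ω ^ log ω a * x := opow_mul_add_lt_opow_mul hr (by exact_mod_cast hcx)
    _ ≤ ω ^ f * x := by gcongr; exact omega0_pos

end CoordBound

section FundSeq

variable {x : ℕ} {α e r : Ordinal}

lemma fundSeq_zero (x : ℕ) : fundSeq x 0 = 0 := by
  rw [fundSeq, WellFounded.fix_eq, dif_pos rfl]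

lemma fundSeq_of_CNF_eq_concat (hα : α < ε₀) {L : List (Ordinal × Ordinal)}
    {p : Ordinal × Ordinal} (hL : CNF ω α = L ++ [p]) :
    fundSeq x α =
      if p.1 = 0 then pred α else ofCNF (L ++ [(p.1, p.2 - 1), (fundSeq x p.1, x)]) := by
  have hα0 : α ≠ 0 := by rintro rfl; simp at hL
  have hp : p.1 < α := fst_lt_of_mem_CNF hα (hL ▸ List.mem_concat_self)
  rw [fundSeq, WellFounded.fix_eq, dif_neg hα0]
  split
  · next h => simp [hL] at h
  · next q h =>
    obtain rfl : q = p := by simpa [hL] using h.symm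
    rw [dif_pos hp, hL, List.dropLast_concat]

lemma fundSeq_natCast (x c : ℕ) : fundSeq x c = ↑(c - 1) := by
  rcases c with _ | n
  · simpa using fundSeq_zero x
  · rw [fundSeq_of_CNF_eq_concat (natCast_lt_epsilon _ 0) (L := [])
      (CNF.of_lt (by exact_mod_cast n.succ_ne_zero) (natCast_lt_omega0 _)), if_pos rfl]
    simp

lemma fundSeq_opow_mul (he0 : e ≠ 0) (he : e < ε₀) {c : ℕ} (hc : c ≠ 0) :
    fundSeq x (ω ^ e * c) = ω ^ e * ↑(c - 1) + ω ^ fundSeq x e * x := by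
  have hpos : 0 < ω ^ e := opow_pos e omega0_pos
  have hCNF : CNF ω (ω ^ e * c) = [] ++ [(e, (c : Ordinal))] := by
    simpa using CNF.opow_mul_add one_lt_omega0 (by exact_mod_cast hc) (natCast_lt_omega0 c) hpos
  rw [fundSeq_of_CNF_eq_concat (by simpa using opow_mul_add_lt_epsilon_zero he hpos c) hCNF,
    if_neg he0]
  simp [ofCNF, natCast_sub]

lemma fundSeq_opow_mul_add (he : e < ε₀) (hr0 : r ≠ 0) (hr : r < ω ^ e) {c : ℕ} (hc : c ≠ 0) :
    fundSeq x (ω ^ e * c + r) = ω ^ e * c + fundSeq x r := by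
  obtain ⟨L, p, hL⟩ := (List.eq_nil_or_concat' (CNF ω r)).resolve_left (by simp [CNF.ne_zero hr0])
  have hCNF : CNF ω (ω ^ e * c + r) = ((e, (c : Ordinal)) :: L) ++ [p] := by
    rw [CNF.opow_mul_add one_lt_omega0 (by exact_mod_cast hc) (natCast_lt_omega0 c) hr, hL]
    rfl
  rw [fundSeq_of_CNF_eq_concat (opow_mul_add_lt_epsilon_zero he hr c) hCNF,
    fundSeq_of_CNF_eq_concat (hr.trans (omega0_opow_lt_epsilon_zero he)) hL]
  split_ifs
  · exact pred_add_of_ne_zero _ hr0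
  · rfl

lemma fundSeq_lt (hα0 : α ≠ 0) (hα : α < ε₀) : fundSeq x α < α := by
  revert hα0
  refine lt_epsilon_zero_induction (fun c hc => ?_) (fun e c he0 he hc ih _ => ?_)
    (fun e r c he hr0 hr hc ih _ => ?_) hα
  · rw [fundSeq_natCast]
    exact_mod_cast Nat.sub_one_lt (by exact_mod_cast hc)
  · rw [fundSeq_opow_mul he0 he hc]
    exact opow_mul_add_lt_opow_mul (opow_mul_natCast_lt_opow (ih he0) x)
      (by exact_mod_cast Nat.sub_one_lt hc)
  · rw [fundSeq_opow_mul_add he hr0 hr hc]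
    exact (add_lt_add_iff_left _).2 (ih hr0)

lemma fundSeq_monotone (hα : α < ε₀) : Monotone fun x => fundSeq x α := by
  intro x y hxy
  refine lt_epsilon_zero_induction (fun c => ?_) (fun e c he0 he hc ih => ?_)
    (fun e r c he hr0 hr hc ih => ?_) hα
  · simp only [fundSeq_natCast, le_refl]
  · simp only [fundSeq_opow_mul he0 he hc]
    gcongr
    exact omega0_pos
  · simp only [fundSeq_opow_mul_add he hr0 hr hc]
    gcongr

lemma coordBound_fundSeq_le (hα : α < ε₀) : coordBound (fundSeq x α) ≤ max (coordBound α) x := by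
  refine lt_epsilon_zero_induction (fun c => ?_) (fun e c he0 he hc ih => ?_)
    (fun e r c he hr0 hr hc ih => ?_) hα
  · simp only [fundSeq_natCast, coordBound_natCast]
    omega
  · have hfe : fundSeq x e < e := fundSeq_lt he0 he
    have hlast := coordBound_opow_mul_le (hfe.trans he) x
    have hsum := coordBound_opow_mul_add_le he (opow_mul_natCast_lt_opow hfe x) (c - 1)
    have hcb := coordBound_opow_mul_add he (opow_pos e omega0_pos) hc
    rw [add_zero, coordBound_zero] at hcb
    rw [fundSeq_opow_mul he0 he hc, hcb]
    omega
  · have hfr : fundSeq x r < ω ^ e :=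
      (fundSeq_lt hr0 (hr.trans (omega0_opow_lt_epsilon_zero he))).trans hr
    rw [fundSeq_opow_mul_add he hr0 hr hc, coordBound_opow_mul_add he hr hc,
      coordBound_opow_mul_add he hfr hc]
    omega

lemma le_fundSeq_of_lt (hα : α < ε₀) {β : Ordinal} (hβα : β < α) (hβ : coordBound β < x) :
    β ≤ fundSeq x α := by
  refine lt_epsilon_zero_induction (P := fun α => ∀ β < α, coordBound β < x → β ≤ fundSeq x α)
    (fun c β hβα hβ => ?_) (fun e c he0 he hc ih β hβα hβ => ?_)
    (fun e r c he hr0 hr hc ih β hβα hβ => ?_) hα β hβα hβ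
  · obtain ⟨n, rfl⟩ := lt_omega0.1 (hβα.trans (natCast_lt_omega0 c))
    rw [fundSeq_natCast]
    norm_cast at hβα ⊢
    omega
  · have hωe : ω ^ e ≠ 0 := opow_ne_zero e omega0_ne_zero
    have hk : β / ω ^ e < c := (lt_mul_iff_div_lt hωe).1 hβα
    obtain ⟨k, hk'⟩ := lt_omega0.1 (hk.trans (natCast_lt_omega0 c))
    set δ := β % ω ^ e
    have hβeq : β = ω ^ e * k + δ := hk' ▸ (div_add_mod β (ω ^ e)).symm
    have hδe : δ < ω ^ e := mod_lt β hωe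
    have hδε : δ < ε₀ := hδe.trans (omega0_opow_lt_epsilon_zero he)
    have hδ : coordBound δ < x := (coordBound_le_opow_mul_add he hδe k).trans_lt (hβeq ▸ hβ)
    have hlog : log ω δ ≤ fundSeq x e :=
      ih _ (lt_log_of_lt_opow he0 hδe) ((coordBound_log_le hδε).trans_lt hδ)
    have hδf : δ < ω ^ fundSeq x e * x := lt_opow_mul_of_coordBound_lt hδε hδ hlog
    rw [fundSeq_opow_mul he0 he hc, hβeq]
    have hkc : k ≤ c - 1 := by
      rw [hk'] at hk
      norm_cast at hk
      omega
    gcongr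
  · rw [fundSeq_opow_mul_add he hr0 hr hc]
    rcases le_or_gt β (ω ^ e * c) with hle | hgt
    · exact hle.trans le_self_add
    obtain ⟨δ, rfl⟩ := exists_add_of_le hgt.le
    have hδr : δ < r := (add_lt_add_iff_left _).1 hβα
    have hδ : coordBound δ < x := (coordBound_le_opow_mul_add he (hδr.trans hr) c).trans_lt hβ
    gcongr
    exact ih δ hδr hδ

end FundSeq

section IterOrd

variable {g : ℕ → ℕ} {α : Ordinal}

lemma iterOrd_zero (g : ℕ → ℕ) (b : ℕ) : iterOrd g 0 b = b := by
  rw [iterOrd, WellFounded.fix_eq, dif_pos rfl]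

lemma iterOrd_of_ne_zero (g : ℕ → ℕ) (hα0 : α ≠ 0) (hα : α < ε₀) (b : ℕ) :
    iterOrd g α b = iterOrd g (fundSeq b α) (g b) := by
  rw [iterOrd, WellFounded.fix_eq, dif_neg hα0, dif_pos (fundSeq_lt hα0 hα)]

variable (hg : Monotone g) (hg1 : ∀ x, x < g x) (hα : α < ε₀)
  (ih_le : ∀ γ < α, ∀ β ≤ γ, ∀ b, coordBound β < b → iterOrd g β b ≤ iterOrd g γ b)
  (ih_mono : ∀ γ < α, MonotoneOn (iterOrd g γ) (Ioi (coordBound γ)))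
include hg1 hα ih_le ih_mono

lemma iterOrd_le_iterOrd_of_forall_lt {β : Ordinal} (hβα : β ≤ α) {b : ℕ}
    (hb : coordBound β < b) : iterOrd g β b ≤ iterOrd g α b := by
  rcases hβα.eq_or_lt with rfl | hβα
  · rfl
  have hα0 : α ≠ 0 := (zero_le.trans_lt hβα).ne'
  have hgb : coordBound β < g b := hb.trans (hg1 b)
  rw [iterOrd_of_ne_zero g hα0 hα]
  calc iterOrd g β b ≤ iterOrd g β (g b) := ih_mono β hβα hb hgb (hg1 b).le
    _ ≤ iterOrd g (fundSeq b α) (g b) :=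
      ih_le _ (fundSeq_lt hα0 hα) β (le_fundSeq_of_lt hα hβα hb) _ hgb

include hg in
lemma monotoneOn_iterOrd_of_forall_lt : MonotoneOn (iterOrd g α) (Ioi (coordBound α)) := by
  rcases eq_or_ne α 0 with rfl | hα0
  · intro b _ b' _ hbb'
    simpa only [iterOrd_zero] using hbb'
  intro b hb b' hb' hbb'
  have hlt : fundSeq b α < α := fundSeq_lt hα0 hα
  have hgb : coordBound (fundSeq b α) < g b :=
    (coordBound_fundSeq_le hα).trans_lt (max_lt (hb.trans (hg1 b)) (hg1 b))
  have hgb' : coordBound (fundSeq b α) < g b' := hgb.trans_le (hg hbb')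
  rw [iterOrd_of_ne_zero g hα0 hα, iterOrd_of_ne_zero g hα0 hα]
  calc iterOrd g (fundSeq b α) (g b) ≤ iterOrd g (fundSeq b α) (g b') :=
        ih_mono _ hlt hgb hgb' (hg hbb')
    _ ≤ iterOrd g (fundSeq b' α) (g b') :=
      ih_le _ (fundSeq_lt hα0 hα) _ (fundSeq_monotone hα hbb') _ hgb'

end IterOrd

theorem iterOrd_le_iterOrd_and_monotoneOn {g : ℕ → ℕ} (hg : Monotone g) (hg1 : ∀ x, x < g x)
    {α : Ordinal} (hα : α < ε₀) :
    (∀ β ≤ α, ∀ b, coordBound β < b → iterOrd g β b ≤ iterOrd g α b) ∧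
      MonotoneOn (iterOrd g α) (Ioi (coordBound α)) := by
  induction α using WellFoundedLT.induction with
  | _ α ih =>
    have ih_le := fun γ hγ => (ih γ hγ (hγ.trans hα)).1
    have ih_mono := fun γ hγ => (ih γ hγ (hγ.trans hα)).2
    exact ⟨fun β hβα b hb => iterOrd_le_iterOrd_of_forall_lt hg1 hα ih_le ih_mono hβα hb,
      monotoneOn_iterOrd_of_forall_lt hg hg1 hα ih_le ih_mono⟩

theorem iterOrd_mono_general (g : ℕ → ℕ) (hg : Monotone g) (hg1 : ∀ x, x + 1 ≤ g x)
    (b : ℕ) (α β : Ordinal.{0}) (hα : α < eps0)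
    (hlt : β < α) (hcoord : coordBound β < b) :
    iterOrd g β b ≤ iterOrd g α b :=
  (iterOrd_le_iterOrd_and_monotoneOn hg hg1 (eps0_eq_epsilon_zero ▸ hα)).1 β hlt.le b hcoord

/-- Monotonicity of transfinite iterates: if `g` is monotone with `g b ≥ b+1`,
`b ≥ 1`, `α > β` are ordinals below `ε₀`, and `|β| < b`, then `g^β(b) ≤ g^α(b)`. -/
theorem iterOrd_mono (g : ℕ → ℕ) (hg : Monotone g) (hg1 : ∀ x, x + 1 ≤ g x)
    (b : ℕ) (hb : 1 ≤ b) (α β : Ordinal.{0}) (hα : α < eps0) (hβ : β < eps0)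
    (hlt : β < α) (hcoord : coordBound β < b) :
    iterOrd g β b ≤ iterOrd g α b :=
  iterOrd_mono_general g hg hg1 b α β hα hlt hcoord
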